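/- Let d ≥ 1, V : ℤ^d → ℝ bounded, H := Δ + V, and suppose ψ ∈ ℓ²(ℤ^d), E ∈ ℝ satisfy Hψ = Eψ. Fix α > 0 and γ ∈ (0, 2/3), and assume Σ_{n∈ℤ^d} exp(2α⟨n⟩^γ)|ψ(n)|² = ∞ (in particular ψ ≠ 0). For s > 0 let Υ_s(x) := ∫₀^x (1+s²t²)^{−1} dt, let F_s act by multiplication by Υ_s(α⟨n⟩^γ), and set Ψ_s := e^{F_s}ψ / ‖e^{F_s}ψ‖ (which is well defined since 0 < ‖e^{F_s}ψ‖ < ∞ for s > 0). Then ‖(H − E)Ψ_s‖ → 0 as s → 0⁺. -/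

import Mathlib

open scoped BigOperators
open Filter Real

noncomputable section

/-- Pointwise discrete Laplacian on `ℤ^d`. -/
def discreteLap (d : ℕ) (u : (Fin d → ℤ) → ℂ) (n : Fin d → ℤ) : ℂ :=
  ∑ i : Fin d,
    (2 * u n - u (Function.update n i (n i - 1)) - u (Function.update n i (n i + 1)))

/-- `⟨n⟩ = √(1 + |n|²)` on `ℤ^d`. -/
def angBr {d : ℕ} (n : Fin d → ℤ) : ℝ := Real.sqrt (1 + ∑ i, ((n i : ℝ)) ^ 2)

/-- The interpolating function `Υ_s(x) = ∫₀ˣ (1 + s²t²)⁻¹ dt`. -/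
def Ups (s x : ℝ) : ℝ := ∫ t in (0:ℝ)..x, (1 + s ^ 2 * t ^ 2)⁻¹

lemma cont_integrand (s : ℝ) : Continuous fun t : ℝ => (1 + s ^ 2 * t ^ 2)⁻¹ := by
  apply Continuous.inv₀ (by continuity)
  intro t; positivity

lemma intInt (s a b : ℝ) :
    IntervalIntegrable (fun t : ℝ => (1 + s ^ 2 * t ^ 2)⁻¹) MeasureTheory.volume a b :=
  (cont_integrand s).intervalIntegrable a b

lemma Ups_lip (s x y : ℝ) : |Ups s x - Ups s y| ≤ |x - y| := by
  have h : Ups s x - Ups s y = ∫ t in y..x, (1 + s ^ 2 * t ^ 2)⁻¹ := by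
    rw [Ups, Ups, ← intervalIntegral.integral_add_adjacent_intervals (intInt s 0 y) (intInt s y x)]
    ring
  rw [h]
  have := intervalIntegral.norm_integral_le_of_norm_le_const (a := y) (b := x) (C := 1)
    (f := fun t : ℝ => (1 + s ^ 2 * t ^ 2)⁻¹) ?_
  · simpa [Real.norm_eq_abs] using this
  · intro t _
    rw [Real.norm_eq_abs, abs_of_nonneg (by positivity)]
    apply inv_le_one_of_one_le₀
    nlinarith [sq_nonneg (s*t)]

lemma Ups_zero (s : ℝ) : Ups s 0 = 0 := intervalIntegral.integral_same

lemma Ups_nonneg (s : ℝ) {x : ℝ} (hx : 0 ≤ x) : 0 ≤ Ups s x :=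
  intervalIntegral.integral_nonneg hx (fun t _ => by positivity)

lemma Ups_le (s : ℝ) {x : ℝ} (hx : 0 ≤ x) : Ups s x ≤ x := by
  have := Ups_lip s x 0
  rw [Ups_zero, sub_zero, sub_zero] at this
  calc Ups s x ≤ |Ups s x| := le_abs_self _
  _ ≤ |x| := this
  _ = x := abs_of_nonneg hx

lemma Ups_lower (s : ℝ) {x : ℝ} (hx : 0 ≤ x) : x * (1 + s ^ 2 * x ^ 2)⁻¹ ≤ Ups s x := by
  rw [Ups]
  have h := intervalIntegral.integral_mono_on (a := 0) (b := x)
    (f := fun _ : ℝ => (1 + s ^ 2 * x ^ 2)⁻¹) (g := fun t : ℝ => (1 + s ^ 2 * t ^ 2)⁻¹)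
    hx (intervalIntegrable_const) (intInt s 0 x) ?_
  · simpa using h
  · intro t ht
    have ht2 : t ^ 2 ≤ x ^ 2 := by nlinarith [ht.1, ht.2]
    exact inv_anti₀ (by positivity)
      (by nlinarith [mul_le_mul_of_nonneg_left ht2 (sq_nonneg s)])

lemma Ups_arctan {s : ℝ} (hs : s ≠ 0) (x : ℝ) : Ups s x = Real.arctan (s * x) / s := by
  rw [Ups]
  have hder : ∀ t ∈ Set.uIcc (0:ℝ) x,
      HasDerivAt (fun u => Real.arctan (s * u) / s) ((1 + s ^ 2 * t ^ 2)⁻¹) t := by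
    intro t _
    have h1 : HasDerivAt (fun u : ℝ => s * u) s t := by simpa using (hasDerivAt_id t).const_mul s
    have h2 := (Real.hasDerivAt_arctan (s * t)).comp t h1
    have h3 := h2.div_const s
    refine h3.congr_deriv ?_
    rw [div_eq_iff hs]
    ring
  rw [intervalIntegral.integral_eq_sub_of_hasDerivAt hder (intInt s 0 x)]
  simp

lemma Ups_bound {s : ℝ} (hs : 0 < s) (x : ℝ) : Ups s x ≤ π / (2 * s) := by
  rw [Ups_arctan hs.ne' x, show π / (2*s) = (π/2)/s by ring, div_le_div_iff_of_pos_right hs]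
  exact (Real.arctan_lt_pi_div_two _).le

lemma Ups_tendsto {x : ℝ} (hx : 0 ≤ x) :
    Tendsto (fun s => Ups s x) (nhdsWithin 0 (Set.Ioi 0)) (nhds x) := by
  apply tendsto_of_tendsto_of_tendsto_of_le_of_le
    (g := fun s : ℝ => x * (1 + s ^ 2 * x ^ 2)⁻¹) (h := fun _ : ℝ => x)
  · have hc : Continuous fun s : ℝ => x * (1 + s ^ 2 * x ^ 2)⁻¹ := by
      apply Continuous.mul continuous_const
      apply Continuous.inv₀ (by continuity)
      intro t; positivity
    have := hc.tendsto 0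
    simp only [zero_pow, zero_mul, ne_eq, OfNat.ofNat_ne_zero, not_false_iff] at this
    have h2 : x * (1 + 0 ^ 2 * x ^ 2)⁻¹ = x := by norm_num
    simpa [h2] using this.mono_left nhdsWithin_le_nhds
  · exact tendsto_const_nhds
  · exact fun s => Ups_lower s hx
  · exact fun s => Ups_le s hx

lemma one_le_angBr {d : ℕ} (n : Fin d → ℤ) : 1 ≤ angBr n := by
  have h0 : (0:ℝ) ≤ ∑ i, ((n i : ℝ))^2 := by positivity
  calc (1:ℝ) = Real.sqrt 1 := Real.sqrt_one.symm
  _ ≤ angBr n := Real.sqrt_le_sqrt (by linarith)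

lemma abs_coord_le_angBr {d : ℕ} (n : Fin d → ℤ) (i : Fin d) : |((n i : ℝ))| ≤ angBr n := by
  rw [angBr]
  have h1 : ((n i:ℝ))^2 ≤ 1 + ∑ j, ((n j : ℝ))^2 := by
    have h := Finset.single_le_sum (f := fun j => ((n j:ℝ))^2)
      (fun j _ => by positivity) (Finset.mem_univ i)
    linarith
  calc |((n i:ℝ))| = Real.sqrt (((n i:ℝ))^2) := (Real.sqrt_sq_eq_abs _).symm
  _ ≤ _ := Real.sqrt_le_sqrt h1

lemma sum_sq_update {d : ℕ} (n : Fin d → ℤ) (i : Fin d) (v : ℤ) :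
    ∑ j, ((Function.update n i v j : ℤ) : ℝ)^2
      = (∑ j, ((n j:ℝ))^2) - ((n i:ℝ))^2 + ((v:ℝ))^2 := by
  have hfun : (fun j => ((Function.update n i v j : ℤ):ℝ)^2)
      = Function.update (fun j => ((n j:ℝ))^2) i (((v:ℝ))^2) := by
    funext j
    exact Function.apply_update (fun _ k => ((k : ℤ):ℝ)^2) n i v j
  rw [hfun, Finset.sum_update_of_mem (Finset.mem_univ i),
      Finset.sum_eq_sum_sdiff_singleton_add (Finset.mem_univ i) (fun j => ((n j:ℝ))^2)]
  ring

lemma angBr_neighbor {d : ℕ} (n : Fin d → ℤ) (i : Fin d) (e : ℤ) (he : |(e:ℝ)| ≤ 1) :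
    |angBr (Function.update n i (n i + e)) - angBr n| ≤ 1 := by
  set m := Function.update n i (n i + e) with hm
  have hmi : m i = n i + e := by rw [hm, Function.update_self]
  have hsum : ∑ j, ((m j:ℝ))^2
      = (∑ j, ((n j:ℝ))^2) - ((n i:ℝ))^2 + (((n i + e : ℤ) : ℝ))^2 := sum_sq_update n i (n i + e)
  set P := ∑ j, ((n j:ℝ))^2 with hP
  set Pm := ∑ j, ((m j:ℝ))^2 with hPm
  have hPn : (0:ℝ) ≤ P := by positivity
  have hPmn : (0:ℝ) ≤ Pm := by positivity
  have h1 := abs_coord_le_angBr n i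
  have h2 := abs_coord_le_angBr m i
  have hsq : (angBr n)^2 = 1 + P := Real.sq_sqrt (by linarith)
  have hsqm : (angBr m)^2 = 1 + Pm := Real.sq_sqrt (by linarith)
  have h0 : 0 ≤ angBr n := Real.sqrt_nonneg _
  have h0m : 0 ≤ angBr m := Real.sqrt_nonneg _
  have hrel : Pm - P = 2*((n i:ℝ))*(e:ℝ) + ((e:ℝ))^2 := by
    rw [hsum]; push_cast; ring
  have hmicast : ((m i:ℝ)) = ((n i:ℝ)) + (e:ℝ) := by rw [hmi]; push_cast; ring
  have he2 : ((e:ℝ))^2 ≤ 1 := by nlinarith [abs_nonneg ((e:ℝ)), sq_abs ((e:ℝ))]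
  have hne : ((n i:ℝ))*(e:ℝ) ≤ angBr n := by
    have habs : |((n i:ℝ)) * (e:ℝ)| ≤ angBr n := by
      rw [abs_mul]
      have := mul_le_mul h1 he (abs_nonneg _) (le_trans (abs_nonneg _) h1)
      linarith [this]
    linarith [le_abs_self (((n i:ℝ)) * (e:ℝ))]
  have hme : -(angBr m) ≤ ((m i:ℝ))*(e:ℝ) := by
    have habs : |((m i:ℝ)) * (e:ℝ)| ≤ angBr m := by
      rw [abs_mul]
      have := mul_le_mul h2 he (abs_nonneg _) (le_trans (abs_nonneg _) h2)
      linarith [this]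
    linarith [neg_abs_le (((m i:ℝ)) * (e:ℝ))]
  have hrel2 : P - Pm = -2*((m i:ℝ))*(e:ℝ) + ((e:ℝ))^2 := by
    linear_combination (-1 : ℝ) * hrel + 2*(e:ℝ) * hmicast
  rw [abs_le]
  constructor
  · nlinarith [hsq, hsqm, hrel2, hme, he2, h0, h0m]
  · nlinarith [hsq, hsqm, hrel, hne, he2, h0, h0m]

lemma rpow_aux {γ : ℝ} (hγ0 : 0 < γ) (hγ1 : γ ≤ 1) {u v : ℝ} (hu : 1 ≤ u) (huv : u ≤ v) :
    v ^ γ - u ^ γ ≤ γ * u ^ (γ - 1) * (v - u) := by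
  have hb : ∀ x ∈ Set.Icc u v, ‖γ * x ^ (γ - 1)‖ ≤ γ * u ^ (γ - 1) := by
    intro x hx
    have hx0 : (0:ℝ) < x := lt_of_lt_of_le (by linarith) hx.1
    rw [Real.norm_eq_abs, abs_of_nonneg (mul_nonneg hγ0.le (Real.rpow_nonneg hx0.le _))]
    have hle : x ^ (γ-1) ≤ u ^ (γ-1) :=
      Real.rpow_le_rpow_of_nonpos (by linarith) hx.1 (by linarith)
    exact mul_le_mul_of_nonneg_left hle hγ0.le
  have hd : ∀ x ∈ Set.Icc u v,
      HasDerivWithinAt (fun x : ℝ => x ^ γ) (γ * x ^ (γ - 1)) (Set.Icc u v) x := by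
    intro x hx
    have hx0 : x ≠ 0 := by
      have : (0:ℝ) < x := lt_of_lt_of_le (by linarith) hx.1
      exact this.ne'
    exact (Real.hasDerivAt_rpow_const (Or.inl hx0)).hasDerivWithinAt
  have hmvt := (convex_Icc u v).norm_image_sub_le_of_norm_hasDerivWithin_le hd hb
    (Set.left_mem_Icc.2 huv) (Set.right_mem_Icc.2 huv)
  rw [Real.norm_eq_abs, Real.norm_eq_abs, abs_of_nonneg (by linarith : (0:ℝ) ≤ v - u)] at hmvt
  linarith [le_abs_self (v ^ γ - u ^ γ)]

lemma rpow_aux2 {γ : ℝ} (hγ0 : 0 < γ) (hγ1 : γ ≤ 1) {u v : ℝ} (hu : 1 ≤ u) (huv : u ≤ v) (h1 : v - u ≤ 1) :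
    v ^ γ - u ^ γ ≤ γ * u ^ (γ - 1) := by
  have := rpow_aux hγ0 hγ1 hu huv
  have hpos : 0 ≤ γ * u ^ (γ-1) := mul_nonneg hγ0.le (Real.rpow_nonneg (by linarith) _)
  nlinarith

lemma rpow_diff_le {γ : ℝ} (hγ0 : 0 < γ) (hγ1 : γ ≤ 1) {a b : ℝ} (ha : 1 ≤ a) (hb : 1 ≤ b)
    (hab : |a - b| ≤ 1) : |a ^ γ - b ^ γ| ≤ γ * (max 1 (b - 1)) ^ (γ - 1) := by
  have habs := abs_le.mp hab
  have hmax : (0:ℝ) < max 1 (b-1) := lt_of_lt_of_le one_pos (le_max_left _ _)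
  rcases le_total a b with h | h
  · have key := rpow_aux2 hγ0 hγ1 ha h (by linarith)
    have hm : max 1 (b-1) ≤ a := max_le ha (by linarith)
    have hmono : a ^ (γ-1) ≤ (max 1 (b-1)) ^ (γ-1) :=
      Real.rpow_le_rpow_of_nonpos hmax hm (by linarith)
    have hmono2 : a ^ γ ≤ b ^ γ := Real.rpow_le_rpow (by linarith) h hγ0.le
    rw [abs_of_nonpos (by linarith)]
    have := mul_le_mul_of_nonneg_left hmono hγ0.le
    linarith
  · have key := rpow_aux2 hγ0 hγ1 hb h (by linarith)
    have hm : max 1 (b-1) ≤ b := max_le hb (by linarith)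
    have hmono : b ^ (γ-1) ≤ (max 1 (b-1)) ^ (γ-1) :=
      Real.rpow_le_rpow_of_nonpos hmax hm (by linarith)
    have hmono2 : b ^ γ ≤ a ^ γ := Real.rpow_le_rpow (by linarith) h hγ0.le
    rw [abs_of_nonneg (by linarith)]
    have := mul_le_mul_of_nonneg_left hmono hγ0.le
    linarith

lemma abs_exp_sub_exp_le (x y : ℝ) :
    |Real.exp x - Real.exp y| ≤ (Real.exp |x - y| - 1) * Real.exp y := by
  rcases le_total x y with h | h
  · rw [abs_of_nonpos (by simpa using Real.exp_le_exp.mpr h), abs_of_nonpos (by linarith)]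
    have h1 : 1 - Real.exp (x-y) ≤ Real.exp (-(x-y)) - 1 := by
      nlinarith [Real.add_one_le_exp (x-y), Real.add_one_le_exp (-(x-y))]
    have h2 : (1 - Real.exp (x-y)) * Real.exp y = -(Real.exp x - Real.exp y) := by
      rw [sub_mul, ← Real.exp_add, one_mul]; ring_nf
    nlinarith [Real.exp_pos y]
  · rw [abs_of_nonneg (by simpa using Real.exp_le_exp.mpr h), abs_of_nonneg (by linarith)]
    have h2 : (Real.exp (x-y) - 1) * Real.exp y = Real.exp x - Real.exp y := by
      rw [sub_mul, ← Real.exp_add, one_mul]; ring_nf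
    linarith

def shiftP {d : ℕ} (i : Fin d) : (Fin d → ℤ) ≃ (Fin d → ℤ) where
  toFun n := Function.update n i (n i + 1)
  invFun n := Function.update n i (n i - 1)
  left_inv n := by
    funext j
    rcases eq_or_ne j i with rfl | hj
    · simp
    · simp [Function.update_of_ne hj]
  right_inv n := by
    funext j
    rcases eq_or_ne j i with rfl | hj
    · simp
    · simp [Function.update_of_ne hj]

lemma shiftP_apply {d : ℕ} (i : Fin d) (n : Fin d → ℤ) :
    shiftP i n = Function.update n i (n i + 1) := rfl

lemma shiftP_symm_apply {d : ℕ} (i : Fin d) (n : Fin d → ℤ) :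
    (shiftP i).symm n = Function.update n i (n i - 1) := rfl

lemma discreteLap_const_mul (d : ℕ) (c : ℂ) (u : (Fin d → ℤ) → ℂ) (n : Fin d → ℤ) :
    discreteLap d (fun k => c * u k) n = c * discreteLap d u n := by
  rw [discreteLap, discreteLap, Finset.mul_sum]
  exact Finset.sum_congr rfl fun i _ => by ring

lemma discreteLap_mulExp (d : ℕ) (F : (Fin d → ℤ) → ℝ) (ψ : (Fin d → ℤ) → ℂ) (n : Fin d → ℤ) :
    discreteLap d (fun k => (Real.exp (F k) : ℂ) * ψ k) n
      = (Real.exp (F n) : ℂ) * discreteLap d ψ n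
        + ∑ i : Fin d,
          (((Real.exp (F n) : ℂ) - (Real.exp (F (Function.update n i (n i - 1))) : ℂ))
              * ψ (Function.update n i (n i - 1))
            + ((Real.exp (F n) : ℂ) - (Real.exp (F (Function.update n i (n i + 1))) : ℂ))
              * ψ (Function.update n i (n i + 1))) := by
  rw [discreteLap, discreteLap, Finset.mul_sum, ← Finset.sum_add_distrib]
  exact Finset.sum_congr rfl fun i _ => by ring

lemma sq_pair_sum_le {d : ℕ} (a b : Fin d → ℝ) :
    (∑ i, (a i + b i))^2 ≤ (2*(d:ℝ)) * ∑ i, ((a i)^2 + (b i)^2) := by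
  have h1 := sq_sum_le_card_mul_sum_sq (s := Finset.univ) (f := fun i => a i + b i)
  have h2 : ∑ i, (a i + b i)^2 ≤ ∑ i, 2*((a i)^2 + (b i)^2) :=
    Finset.sum_le_sum fun i _ => by nlinarith [sq_nonneg (a i - b i)]
  have hcard : (((Finset.univ : Finset (Fin d)).card : ℝ)) = (d:ℝ) := by simp
  have h3 : ((Finset.univ : Finset (Fin d)).card : ℝ) * (∑ i, (a i + b i)^2)
      ≤ (d:ℝ) * ∑ i, 2*((a i)^2 + (b i)^2) := by
    rw [hcard]
    exact mul_le_mul_of_nonneg_left h2 (Nat.cast_nonneg d)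
  have h4 : (d:ℝ) * ∑ i, 2*((a i)^2 + (b i)^2) = (2*(d:ℝ)) * ∑ i, ((a i)^2 + (b i)^2) := by
    rw [← Finset.mul_sum]; ring
  calc (∑ i, (a i + b i))^2 ≤ ((Finset.univ : Finset (Fin d)).card : ℝ) * ∑ i, (a i + b i)^2 := by
        exact_mod_cast h1
  _ ≤ (d:ℝ) * ∑ i, 2*((a i)^2 + (b i)^2) := h3
  _ = _ := h4

lemma core_bound {d : ℕ} (ψ Φ : (Fin d → ℤ) → ℂ) (V : (Fin d → ℤ) → ℝ) (E : ℝ)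
    (heig : ∀ n, discreteLap d ψ n + (V n : ℂ) * ψ n = (E : ℂ) * ψ n)
    (F g : (Fin d → ℤ) → ℝ) (c : ℂ)
    (hΦ : ∀ n, Φ n = c * ((Real.exp (F n) : ℂ) * ψ n))
    (hnbM : ∀ (n : Fin d → ℤ) (i : Fin d),
      |Real.exp (F n) - Real.exp (F (Function.update n i (n i - 1)))|
      ≤ g (Function.update n i (n i - 1)) * Real.exp (F (Function.update n i (n i - 1))))
    (hnbP : ∀ (n : Fin d → ℤ) (i : Fin d),
      |Real.exp (F n) - Real.exp (F (Function.update n i (n i + 1)))|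
      ≤ g (Function.update n i (n i + 1)) * Real.exp (F (Function.update n i (n i + 1))))
    (hq : Summable fun m => (g m * (Real.exp (F m) * ‖ψ m‖)) ^ 2) :
    ∑' n, ‖discreteLap d Φ n + (V n : ℂ) * Φ n - (E : ℂ) * Φ n‖ ^ 2
      ≤ ‖c‖^2 * (2*(d:ℝ))^2 * ∑' m, (g m * (Real.exp (F m) * ‖ψ m‖)) ^ 2 := by
  have hΦfun : Φ = fun n => c * ((Real.exp (F n) : ℂ) * ψ n) := funext hΦ
  have herr : ∀ n, discreteLap d Φ n + (V n : ℂ) * Φ n - (E : ℂ) * Φ n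
      = c * ∑ i : Fin d,
          (((Real.exp (F n) : ℂ) - (Real.exp (F (Function.update n i (n i - 1))) : ℂ))
              * ψ (Function.update n i (n i - 1))
            + ((Real.exp (F n) : ℂ) - (Real.exp (F (Function.update n i (n i + 1))) : ℂ))
              * ψ (Function.update n i (n i + 1))) := by
    intro n
    have h2 : discreteLap d ψ n = (E:ℂ) * ψ n - (V n:ℂ) * ψ n := by
      linear_combination heig n
    rw [hΦfun, discreteLap_const_mul, discreteLap_mulExp, h2]
    simp only []
    ring
  have stepB : ∀ n, ‖discreteLap d Φ n + (V n : ℂ) * Φ n - (E : ℂ) * Φ n‖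
      ≤ ‖c‖ * ∑ i : Fin d,
        (g (Function.update n i (n i - 1)) * (Real.exp (F (Function.update n i (n i - 1)))
            * ‖ψ (Function.update n i (n i - 1))‖)
          + g (Function.update n i (n i + 1)) * (Real.exp (F (Function.update n i (n i + 1)))
            * ‖ψ (Function.update n i (n i + 1))‖)) := by
    intro n
    rw [herr n, norm_mul]
    refine mul_le_mul_of_nonneg_left ?_ (norm_nonneg c)
    refine le_trans (norm_sum_le _ _) (Finset.sum_le_sum fun i _ => ?_)
    refine le_trans (norm_add_le _ _) ?_
    have e1 : ∀ m : Fin d → ℤ, ‖((Real.exp (F n) : ℂ) - (Real.exp (F m) : ℂ)) * ψ m‖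
        = |Real.exp (F n) - Real.exp (F m)| * ‖ψ m‖ := by
      intro m
      rw [norm_mul, ← Complex.ofReal_sub, Complex.norm_real, Real.norm_eq_abs]
    rw [e1, e1]
    have b1 := mul_le_mul_of_nonneg_right (hnbM n i)
      (norm_nonneg (ψ (Function.update n i (n i - 1))))
    have b2 := mul_le_mul_of_nonneg_right (hnbP n i)
      (norm_nonneg (ψ (Function.update n i (n i + 1))))
    ring_nf at b1 b2 ⊢
    linarith
  have stepC : ∀ n, ‖discreteLap d Φ n + (V n : ℂ) * Φ n - (E : ℂ) * Φ n‖^2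
      ≤ (‖c‖^2 * (2*(d:ℝ))) * ∑ i : Fin d,
        ((g (Function.update n i (n i - 1)) * (Real.exp (F (Function.update n i (n i - 1)))
            * ‖ψ (Function.update n i (n i - 1))‖))^2
          + (g (Function.update n i (n i + 1)) * (Real.exp (F (Function.update n i (n i + 1)))
            * ‖ψ (Function.update n i (n i + 1))‖))^2) := by
    intro n
    have h1 := pow_le_pow_left₀ (norm_nonneg _) (stepB n) 2
    rw [mul_pow] at h1
    refine le_trans h1 ?_
    rw [mul_assoc]
    refine mul_le_mul_of_nonneg_left ?_ (sq_nonneg ‖c‖)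
    exact sq_pair_sum_le _ _
  -- summability
  have hqM : ∀ i : Fin d, Summable (fun n : Fin d → ℤ =>
      (g (Function.update n i (n i - 1)) * (Real.exp (F (Function.update n i (n i - 1)))
        * ‖ψ (Function.update n i (n i - 1))‖))^2) := by
    intro i
    have := hq.comp_injective (shiftP i).symm.injective
    simpa [Function.comp_def, shiftP_symm_apply] using this
  have hqP : ∀ i : Fin d, Summable (fun n : Fin d → ℤ =>
      (g (Function.update n i (n i + 1)) * (Real.exp (F (Function.update n i (n i + 1)))
        * ‖ψ (Function.update n i (n i + 1))‖))^2) := by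
    intro i
    have := hq.comp_injective (shiftP i).injective
    simpa [Function.comp_def, shiftP_apply] using this
  have hmaj : Summable (fun n : Fin d → ℤ => (‖c‖^2 * (2*(d:ℝ))) * ∑ i : Fin d,
        ((g (Function.update n i (n i - 1)) * (Real.exp (F (Function.update n i (n i - 1)))
            * ‖ψ (Function.update n i (n i - 1))‖))^2
          + (g (Function.update n i (n i + 1)) * (Real.exp (F (Function.update n i (n i + 1)))
            * ‖ψ (Function.update n i (n i + 1))‖))^2)) := by
    refine Summable.mul_left _ ?_
    refine summable_sum fun i _ => ?_
    exact (hqM i).add (hqP i)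
  have herrS : Summable (fun n => ‖discreteLap d Φ n + (V n : ℂ) * Φ n - (E : ℂ) * Φ n‖^2) :=
    Summable.of_nonneg_of_le (fun n => sq_nonneg _) stepC hmaj
  have treindexM : ∀ i : Fin d, (∑' n : Fin d → ℤ,
      (g (Function.update n i (n i - 1)) * (Real.exp (F (Function.update n i (n i - 1)))
        * ‖ψ (Function.update n i (n i - 1))‖))^2)
      = ∑' m, (g m * (Real.exp (F m) * ‖ψ m‖)) ^ 2 := by
    intro i
    have := Equiv.tsum_eq (shiftP i).symm (fun m => (g m * (Real.exp (F m) * ‖ψ m‖)) ^ 2)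
    simpa [shiftP_symm_apply] using this
  have treindexP : ∀ i : Fin d, (∑' n : Fin d → ℤ,
      (g (Function.update n i (n i + 1)) * (Real.exp (F (Function.update n i (n i + 1)))
        * ‖ψ (Function.update n i (n i + 1))‖))^2)
      = ∑' m, (g m * (Real.exp (F m) * ‖ψ m‖)) ^ 2 := by
    intro i
    have := Equiv.tsum_eq (shiftP i) (fun m => (g m * (Real.exp (F m) * ‖ψ m‖)) ^ 2)
    simpa [shiftP_apply] using this
  calc ∑' n, ‖discreteLap d Φ n + (V n : ℂ) * Φ n - (E : ℂ) * Φ n‖ ^ 2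
      ≤ ∑' n : Fin d → ℤ, (‖c‖^2 * (2*(d:ℝ))) * ∑ i : Fin d,
        ((g (Function.update n i (n i - 1)) * (Real.exp (F (Function.update n i (n i - 1)))
            * ‖ψ (Function.update n i (n i - 1))‖))^2
          + (g (Function.update n i (n i + 1)) * (Real.exp (F (Function.update n i (n i + 1)))
            * ‖ψ (Function.update n i (n i + 1))‖))^2) := Summable.tsum_le_tsum stepC herrS hmaj
  _ = (‖c‖^2 * (2*(d:ℝ))) * ∑' n : Fin d → ℤ, ∑ i : Fin d,
        ((g (Function.update n i (n i - 1)) * (Real.exp (F (Function.update n i (n i - 1)))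
            * ‖ψ (Function.update n i (n i - 1))‖))^2
          + (g (Function.update n i (n i + 1)) * (Real.exp (F (Function.update n i (n i + 1)))
            * ‖ψ (Function.update n i (n i + 1))‖))^2) := tsum_mul_left
  _ = (‖c‖^2 * (2*(d:ℝ))) * ∑ i : Fin d, ((∑' n : Fin d → ℤ,
        (g (Function.update n i (n i - 1)) * (Real.exp (F (Function.update n i (n i - 1)))
            * ‖ψ (Function.update n i (n i - 1))‖))^2)
          + ∑' n : Fin d → ℤ, (g (Function.update n i (n i + 1))
            * (Real.exp (F (Function.update n i (n i + 1)))
            * ‖ψ (Function.update n i (n i + 1))‖))^2) := by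
      rw [Summable.tsum_finsetSum (fun i _ => (hqM i).add (hqP i))]
      exact congrArg _ (Finset.sum_congr rfl fun i _ => Summable.tsum_add (hqM i) (hqP i))
  _ = (‖c‖^2 * (2*(d:ℝ))) * ∑ i : Fin d,
        (2 * ∑' m, (g m * (Real.exp (F m) * ‖ψ m‖)) ^ 2) := by
      refine congrArg _ (Finset.sum_congr rfl fun i _ => ?_)
      rw [treindexM i, treindexP i]; ring
  _ = ‖c‖^2 * (2*(d:ℝ))^2 * ∑' m, (g m * (Real.exp (F m) * ‖ψ m‖)) ^ 2 := by
      rw [Finset.sum_const, Finset.card_univ, Fintype.card_fin]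
      push_cast
      ring

lemma key_est {d : ℕ} (V : (Fin d → ℤ) → ℝ) (ψ : (Fin d → ℤ) → ℂ) (E α γ : ℝ)
    (hψ : Summable fun n => ‖ψ n‖ ^ 2)
    (heig : ∀ n, discreteLap d ψ n + (V n : ℂ) * ψ n = (E : ℂ) * ψ n)
    (hα : 0 < α) (hγ0 : 0 < γ) (hγ1 : γ ≤ 1)
    {s : ℝ} (hs : 0 < s) {R : ℝ} (hR : 1 ≤ R)
    (Φ : (Fin d → ℤ) → ℂ)
    (hΦ : ∀ n, Φ n = (Real.exp (Ups s (α * angBr n ^ γ)) : ℂ) * ψ n /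
        ((Real.sqrt (∑' m : Fin d → ℤ, Real.exp (2 * Ups s (α * angBr m ^ γ)) * ‖ψ m‖ ^ 2)) : ℂ))
    (hD : 0 < ∑' m : Fin d → ℤ, Real.exp (2 * Ups s (α * angBr m ^ γ)) * ‖ψ m‖ ^ 2) :
    ∑' n, ‖discreteLap d Φ n + (V n : ℂ) * Φ n - (E : ℂ) * Φ n‖ ^ 2 ≤
      (2*(d:ℝ))^2 * ((Real.exp (α*γ) - 1)^2 * Real.exp (2*(α * (R+1)^γ)) * (∑' n, ‖ψ n‖^2)
          / (∑' m : Fin d → ℤ, Real.exp (2 * Ups s (α * angBr m ^ γ)) * ‖ψ m‖ ^ 2)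
        + (Real.exp (α*γ*R^(γ-1)) - 1)^2) := by
  set D : ℝ := ∑' m : Fin d → ℤ, Real.exp (2 * Ups s (α * angBr m ^ γ)) * ‖ψ m‖ ^ 2 with hDdef
  -- basic facts
  have hang0 : ∀ m : Fin d → ℤ, (0:ℝ) ≤ angBr m := fun m => le_trans zero_le_one (one_le_angBr m)
  have harg : ∀ m : Fin d → ℤ, (0:ℝ) ≤ α * angBr m ^ γ :=
    fun m => mul_nonneg hα.le (Real.rpow_nonneg (hang0 m) _)
  have hF0 : ∀ m : Fin d → ℤ, 0 ≤ Ups s (α * angBr m ^ γ) := fun m => Ups_nonneg s (harg m)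
  have hexp0 : ∀ m : Fin d → ℤ, (0:ℝ) ≤ α * γ * (max 1 (angBr m - 1)) ^ (γ - 1) :=
    fun m => mul_nonneg (mul_nonneg hα.le hγ0.le)
      (Real.rpow_nonneg (le_trans zero_le_one (le_max_left _ _)) _)
  have hg0 : ∀ m : Fin d → ℤ, (0:ℝ) ≤ Real.exp (α * γ * (max 1 (angBr m - 1)) ^ (γ - 1)) - 1 :=
    fun m => sub_nonneg.mpr (Real.one_le_exp (hexp0 m))
  have hgle : ∀ m : Fin d → ℤ,
      Real.exp (α * γ * (max 1 (angBr m - 1)) ^ (γ - 1)) - 1 ≤ Real.exp (α*γ) - 1 := by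
    intro m
    have h1 : (max 1 (angBr m - 1)) ^ (γ - 1) ≤ 1 :=
      Real.rpow_le_one_of_one_le_of_nonpos (le_max_left _ _) (by linarith)
    have h2 : α * γ * (max 1 (angBr m - 1)) ^ (γ - 1) ≤ α * γ * 1 :=
      mul_le_mul_of_nonneg_left h1 (mul_nonneg hα.le hγ0.le)
    have := Real.exp_le_exp.mpr (by linarith : α * γ * (max 1 (angBr m - 1)) ^ (γ - 1) ≤ α * γ)
    linarith
  -- the neighbor bound
  have key : ∀ (n : Fin d → ℤ) (i : Fin d) (e : ℤ), |(e:ℝ)| ≤ 1 →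
      |Real.exp (Ups s (α * angBr n ^ γ))
          - Real.exp (Ups s (α * angBr (Function.update n i (n i + e)) ^ γ))|
        ≤ (Real.exp (α*γ*(max 1 (angBr (Function.update n i (n i + e)) - 1))^(γ-1)) - 1)
          * Real.exp (Ups s (α * angBr (Function.update n i (n i + e)) ^ γ)) := by
    intro n i e he
    set m := Function.update n i (n i + e) with hm
    have h1 : |Ups s (α * angBr n ^ γ) - Ups s (α * angBr m ^ γ)|
        ≤ α*γ*(max 1 (angBr m - 1))^(γ-1) := by
      refine le_trans (Ups_lip s _ _) ?_
      rw [← mul_sub, abs_mul, abs_of_nonneg hα.le]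
      have hab : |angBr n - angBr m| ≤ 1 := by
        rw [abs_sub_comm]; exact angBr_neighbor n i e he
      have h2 := rpow_diff_le hγ0 hγ1 (one_le_angBr n) (one_le_angBr m) hab
      calc α * |angBr n ^ γ - angBr m ^ γ|
          ≤ α * (γ * (max 1 (angBr m - 1))^(γ-1)) := mul_le_mul_of_nonneg_left h2 hα.le
      _ = _ := by ring
    have h3 := abs_exp_sub_exp_le (Ups s (α * angBr n ^ γ)) (Ups s (α * angBr m ^ γ))
    refine le_trans h3 ?_
    refine mul_le_mul_of_nonneg_right ?_ (Real.exp_pos _).le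
    have h4 := Real.exp_le_exp.mpr h1
    linarith
  have hnbM : ∀ (n : Fin d → ℤ) (i : Fin d),
      |Real.exp (Ups s (α * angBr n ^ γ))
          - Real.exp (Ups s (α * angBr (Function.update n i (n i - 1)) ^ γ))|
        ≤ (Real.exp (α*γ*(max 1 (angBr (Function.update n i (n i - 1)) - 1))^(γ-1)) - 1)
          * Real.exp (Ups s (α * angBr (Function.update n i (n i - 1)) ^ γ)) := by
    intro n i
    have := key n i (-1) (by norm_num)
    simpa [sub_eq_add_neg] using this
  have hnbP : ∀ (n : Fin d → ℤ) (i : Fin d),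
      |Real.exp (Ups s (α * angBr n ^ γ))
          - Real.exp (Ups s (α * angBr (Function.update n i (n i + 1)) ^ γ))|
        ≤ (Real.exp (α*γ*(max 1 (angBr (Function.update n i (n i + 1)) - 1))^(γ-1)) - 1)
          * Real.exp (Ups s (α * angBr (Function.update n i (n i + 1)) ^ γ)) := by
    intro n i
    exact key n i 1 (by norm_num)
  -- summability of q
  have hFle : ∀ m : Fin d → ℤ, Ups s (α * angBr m ^ γ) ≤ π/(2*s) := fun m => Ups_bound hs _
  have hq : Summable (fun m : Fin d → ℤ =>
      ((Real.exp (α * γ * (max 1 (angBr m - 1)) ^ (γ - 1)) - 1)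
        * (Real.exp (Ups s (α * angBr m ^ γ)) * ‖ψ m‖)) ^ 2) := by
    refine Summable.of_nonneg_of_le (fun m => sq_nonneg _) (fun m => ?_)
      (hψ.mul_left (((Real.exp (α*γ) - 1) * Real.exp (π/(2*s)))^2))
    have e1 : (Real.exp (α * γ * (max 1 (angBr m - 1)) ^ (γ - 1)) - 1)
        * (Real.exp (Ups s (α * angBr m ^ γ)) * ‖ψ m‖)
        ≤ (Real.exp (α*γ) - 1) * (Real.exp (π/(2*s)) * ‖ψ m‖) := by
      refine mul_le_mul (hgle m) ?_ (mul_nonneg (Real.exp_pos _).le (norm_nonneg _)) ?_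
      · exact mul_le_mul_of_nonneg_right (Real.exp_le_exp.mpr (hFle m)) (norm_nonneg _)
      · have := hg0 m; have := hgle m; linarith
    have e2 := pow_le_pow_left₀ (mul_nonneg (hg0 m)
      (mul_nonneg (Real.exp_pos _).le (norm_nonneg _))) e1 2
    calc ((Real.exp (α * γ * (max 1 (angBr m - 1)) ^ (γ - 1)) - 1)
        * (Real.exp (Ups s (α * angBr m ^ γ)) * ‖ψ m‖)) ^ 2
        ≤ ((Real.exp (α*γ) - 1) * (Real.exp (π/(2*s)) * ‖ψ m‖))^2 := e2
    _ = ((Real.exp (α*γ) - 1) * Real.exp (π/(2*s)))^2 * ‖ψ m‖^2 := by ring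
  -- core bound
  have hΦ' : ∀ n, Φ n = ((Real.sqrt D : ℝ) : ℂ)⁻¹
      * ((Real.exp (Ups s (α * angBr n ^ γ)) : ℂ) * ψ n) := by
    intro n
    rw [hΦ n, div_eq_mul_inv, mul_comm]
  have hcore := core_bound ψ Φ V E heig
    (fun n => Ups s (α * angBr n ^ γ))
    (fun m => Real.exp (α * γ * (max 1 (angBr m - 1)) ^ (γ - 1)) - 1)
    (((Real.sqrt D : ℝ) : ℂ))⁻¹ hΦ' hnbM hnbP hq
  have hc : ‖(((Real.sqrt D : ℝ) : ℂ))⁻¹‖^2 = D⁻¹ := by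
    rw [norm_inv, Complex.norm_real, Real.norm_eq_abs, abs_of_nonneg (Real.sqrt_nonneg _),
      inv_pow, Real.sq_sqrt hD.le]
  rw [hc] at hcore
  -- summability of w
  have hwS : Summable (fun m : Fin d → ℤ => Real.exp (2 * Ups s (α * angBr m ^ γ)) * ‖ψ m‖^2) := by
    refine Summable.of_nonneg_of_le (fun m => by positivity) (fun m => ?_)
      (hψ.mul_left (Real.exp (π/s)))
    have h1 : 2 * Ups s (α * angBr m ^ γ) ≤ π/s := by
      have h2 := hFle m
      have h3 : 2 * (π/(2*s)) = π/s := by field_simp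
      linarith
    exact mul_le_mul_of_nonneg_right (Real.exp_le_exp.mpr h1) (sq_nonneg _)
  -- split estimate
  have hsplit : ∀ m : Fin d → ℤ,
      ((Real.exp (α * γ * (max 1 (angBr m - 1)) ^ (γ - 1)) - 1)
        * (Real.exp (Ups s (α * angBr m ^ γ)) * ‖ψ m‖)) ^ 2
      ≤ ((Real.exp (α*γ) - 1)^2 * Real.exp (2*(α * (R+1)^γ))) * ‖ψ m‖^2
        + (Real.exp (α*γ*R^(γ-1)) - 1)^2
          * (Real.exp (2 * Ups s (α * angBr m ^ γ)) * ‖ψ m‖^2) := by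
    intro m
    have hw : (Real.exp (Ups s (α * angBr m ^ γ)) * ‖ψ m‖)^2
        = Real.exp (2 * Ups s (α * angBr m ^ γ)) * ‖ψ m‖^2 := by
      rw [mul_pow, two_mul, Real.exp_add, sq]
    rcases le_or_gt (angBr m) (R + 1) with hcase | hcase
    · -- low region
      have hb1 : Real.exp (Ups s (α * angBr m ^ γ)) * ‖ψ m‖
          ≤ Real.exp (α * (R+1)^γ) * ‖ψ m‖ := by
        refine mul_le_mul_of_nonneg_right (Real.exp_le_exp.mpr ?_) (norm_nonneg _)
        have h1 : Ups s (α * angBr m ^ γ) ≤ α * angBr m ^ γ := Ups_le s (harg m)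
        have h2 : angBr m ^ γ ≤ (R+1)^γ := Real.rpow_le_rpow (hang0 m) hcase hγ0.le
        have h3 : α * angBr m ^ γ ≤ α * (R+1)^γ := mul_le_mul_of_nonneg_left h2 hα.le
        linarith
      have e2 := mul_le_mul (hgle m) hb1 (mul_nonneg (Real.exp_pos _).le (norm_nonneg _))
        (by have := hg0 m; have := hgle m; linarith)
      have e3 := pow_le_pow_left₀ (mul_nonneg (hg0 m)
        (mul_nonneg (Real.exp_pos _).le (norm_nonneg _))) e2 2
      have hpos : (0:ℝ) ≤ (Real.exp (α*γ*R^(γ-1)) - 1)^2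
          * (Real.exp (2 * Ups s (α * angBr m ^ γ)) * ‖ψ m‖^2) := by positivity
      have e4 : ((Real.exp (α*γ) - 1) * (Real.exp (α * (R+1)^γ) * ‖ψ m‖))^2
          = ((Real.exp (α*γ) - 1)^2 * Real.exp (2*(α * (R+1)^γ))) * ‖ψ m‖^2 := by
        rw [show Real.exp (2*(α * (R+1)^γ)) = Real.exp (α * (R+1)^γ)^2 by
          rw [two_mul, Real.exp_add, sq]]
        ring
      calc _ ≤ ((Real.exp (α*γ) - 1) * (Real.exp (α * (R+1)^γ) * ‖ψ m‖))^2 := e3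
      _ = ((Real.exp (α*γ) - 1)^2 * Real.exp (2*(α * (R+1)^γ))) * ‖ψ m‖^2 := e4
      _ ≤ _ := by linarith
    · -- high region
      have hmax : R ≤ max 1 (angBr m - 1) := le_trans (by linarith) (le_max_right _ _)
      have h1 : (max 1 (angBr m - 1)) ^ (γ - 1) ≤ R ^ (γ-1) :=
        Real.rpow_le_rpow_of_nonpos (by linarith) hmax (by linarith)
      have h2 : α * γ * (max 1 (angBr m - 1)) ^ (γ - 1) ≤ α * γ * R^(γ-1) :=
        mul_le_mul_of_nonneg_left h1 (mul_nonneg hα.le hγ0.le)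
      have h3 : Real.exp (α * γ * (max 1 (angBr m - 1)) ^ (γ - 1)) - 1
          ≤ Real.exp (α*γ*R^(γ-1)) - 1 := by
        have := Real.exp_le_exp.mpr h2; linarith
      have e3 := mul_le_mul_of_nonneg_right
        (pow_le_pow_left₀ (hg0 m) h3 2)
        (sq_nonneg (Real.exp (Ups s (α * angBr m ^ γ)) * ‖ψ m‖))
      have hpos : (0:ℝ) ≤ ((Real.exp (α*γ) - 1)^2 * Real.exp (2*(α * (R+1)^γ))) * ‖ψ m‖^2 := by
        positivity
      calc ((Real.exp (α * γ * (max 1 (angBr m - 1)) ^ (γ - 1)) - 1)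
          * (Real.exp (Ups s (α * angBr m ^ γ)) * ‖ψ m‖)) ^ 2
          = (Real.exp (α * γ * (max 1 (angBr m - 1)) ^ (γ - 1)) - 1)^2
            * (Real.exp (Ups s (α * angBr m ^ γ)) * ‖ψ m‖)^2 := by ring
      _ ≤ (Real.exp (α*γ*R^(γ-1)) - 1)^2
            * (Real.exp (Ups s (α * angBr m ^ γ)) * ‖ψ m‖)^2 := e3
      _ = (Real.exp (α*γ*R^(γ-1)) - 1)^2
            * (Real.exp (2 * Ups s (α * angBr m ^ γ)) * ‖ψ m‖^2) := by rw [hw]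
      _ ≤ _ := by linarith
  have hQ : (∑' m : Fin d → ℤ, ((Real.exp (α * γ * (max 1 (angBr m - 1)) ^ (γ - 1)) - 1)
        * (Real.exp (Ups s (α * angBr m ^ γ)) * ‖ψ m‖)) ^ 2)
      ≤ ((Real.exp (α*γ) - 1)^2 * Real.exp (2*(α * (R+1)^γ))) * (∑' n, ‖ψ n‖^2)
        + (Real.exp (α*γ*R^(γ-1)) - 1)^2 * D := by
    have hs1 := hψ.mul_left ((Real.exp (α*γ) - 1)^2 * Real.exp (2*(α * (R+1)^γ)))
    have hs2 := hwS.mul_left ((Real.exp (α*γ*R^(γ-1)) - 1)^2)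
    calc _ ≤ ∑' m : Fin d → ℤ, (((Real.exp (α*γ) - 1)^2 * Real.exp (2*(α * (R+1)^γ))) * ‖ψ m‖^2
        + (Real.exp (α*γ*R^(γ-1)) - 1)^2
          * (Real.exp (2 * Ups s (α * angBr m ^ γ)) * ‖ψ m‖^2)) :=
          Summable.tsum_le_tsum hsplit hq (hs1.add hs2)
    _ = _ := by rw [Summable.tsum_add hs1 hs2, tsum_mul_left, tsum_mul_left]
  -- combine
  have hfinal := le_trans hcore (by
    refine mul_le_mul_of_nonneg_left hQ ?_
    positivity)
  refine le_trans hfinal (le_of_eq ?_)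
  field_simp

/-- Key step in the proof of Theorem 1.3: if `Hψ = Eψ` with
`∑ exp(2α⟨n⟩^γ)|ψ(n)|² = ∞`, then for the normalized regularized vectors
`Ψ_s = e^{F_s}ψ/‖e^{F_s}ψ‖` (with `F_s = Υ_s(α⟨n⟩^γ)`) one has `‖(H−E)Ψ_s‖ → 0`
as `s → 0⁺`. -/
theorem regularized_eigenvector_energy_localization
    (d : ℕ) (hd : 1 ≤ d) (V : (Fin d → ℤ) → ℝ) (hV : ∃ M : ℝ, ∀ n, |V n| ≤ M)
    (ψ : (Fin d → ℤ) → ℂ) (E : ℝ)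
    (hψ : Summable fun n => ‖ψ n‖ ^ 2)
    (heig : ∀ n, discreteLap d ψ n + (V n : ℂ) * ψ n = (E : ℂ) * ψ n)
    (α γ : ℝ) (hα : 0 < α) (hγ : γ ∈ Set.Ioo (0 : ℝ) (2/3))
    (hdiv : ¬ Summable fun n : Fin d → ℤ => Real.exp (2 * α * angBr n ^ γ) * ‖ψ n‖ ^ 2)
    (Ψ : ℝ → (Fin d → ℤ) → ℂ)
    (hΨ : ∀ (s : ℝ) (n : Fin d → ℤ), Ψ s n =
      (Real.exp (Ups s (α * angBr n ^ γ)) : ℂ) * ψ n /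
        (Real.sqrt (∑' m : Fin d → ℤ,
          Real.exp (2 * Ups s (α * angBr m ^ γ)) * ‖ψ m‖ ^ 2) : ℂ)) :
    Filter.Tendsto
      (fun s : ℝ => Real.sqrt (∑' n : Fin d → ℤ,
        ‖discreteLap d (Ψ s) n + (V n : ℂ) * Ψ s n - (E : ℂ) * Ψ s n‖ ^ 2))
      (nhdsWithin 0 (Set.Ioi 0)) (nhds 0) := by
  obtain ⟨hγ0, hγ23⟩ := hγ
  have hγ1 : γ ≤ 1 := by linarith
  have hang0 : ∀ m : Fin d → ℤ, (0:ℝ) ≤ angBr m := fun m => le_trans zero_le_one (one_le_angBr m)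
  have harg : ∀ m : Fin d → ℤ, (0:ℝ) ≤ α * angBr m ^ γ :=
    fun m => mul_nonneg hα.le (Real.rpow_nonneg (hang0 m) _)
  -- summability of the weights for s > 0
  have hwS : ∀ s : ℝ, 0 < s →
      Summable (fun m : Fin d → ℤ => Real.exp (2 * Ups s (α * angBr m ^ γ)) * ‖ψ m‖^2) := by
    intro s hs
    refine Summable.of_nonneg_of_le (fun m => by positivity) (fun m => ?_)
      (hψ.mul_left (Real.exp (π/s)))
    have h2 := Ups_bound hs (α * angBr m ^ γ)
    have h3 : 2 * (π/(2*s)) = π/s := by field_simp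
    exact mul_le_mul_of_nonneg_right (Real.exp_le_exp.mpr (by linarith)) (sq_nonneg _)
  -- D tends to infinity
  have hDtop : Filter.Tendsto
      (fun s : ℝ => ∑' m : Fin d → ℤ, Real.exp (2 * Ups s (α * angBr m ^ γ)) * ‖ψ m‖ ^ 2)
      (nhdsWithin 0 (Set.Ioi 0)) Filter.atTop := by
    rw [Filter.tendsto_atTop]
    intro C
    obtain ⟨T, hT⟩ : ∃ T : Finset (Fin d → ℤ),
        C + 1 < ∑ m ∈ T, Real.exp (2 * α * angBr m ^ γ) * ‖ψ m‖^2 := by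
      by_contra hc
      push_neg at hc
      exact hdiv (summable_of_sum_le (fun n => by positivity) hc)
    have hlim : Filter.Tendsto
        (fun s : ℝ => ∑ m ∈ T, Real.exp (2 * Ups s (α * angBr m ^ γ)) * ‖ψ m‖^2)
        (nhdsWithin 0 (Set.Ioi 0))
        (nhds (∑ m ∈ T, Real.exp (2 * (α * angBr m ^ γ)) * ‖ψ m‖^2)) := by
      refine tendsto_finset_sum _ fun m _ => ?_
      have h1 := Ups_tendsto (harg m)
      have h2 := (Real.continuous_exp.tendsto (2 * (α * angBr m ^ γ))).comp (h1.const_mul 2)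
      exact h2.mul_const _
    have hEq : ∑ m ∈ T, Real.exp (2 * (α * angBr m ^ γ)) * ‖ψ m‖^2
        = ∑ m ∈ T, Real.exp (2 * α * angBr m ^ γ) * ‖ψ m‖^2 :=
      Finset.sum_congr rfl fun m _ => by rw [mul_assoc]
    have hCC : C < ∑ m ∈ T, Real.exp (2 * (α * angBr m ^ γ)) * ‖ψ m‖^2 := by
      rw [hEq]; linarith
    have hev := hlim.eventually (eventually_gt_nhds hCC)
    filter_upwards [hev, eventually_mem_nhdsWithin] with s h1 h2
    have h3 := Summable.sum_le_tsum T (fun m _ => by positivity) (hwS s h2)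
    linarith
  -- reduce to the square of the norm
  suffices hNN : Filter.Tendsto
      (fun s : ℝ => ∑' n : Fin d → ℤ,
        ‖discreteLap d (Ψ s) n + (V n : ℂ) * Ψ s n - (E : ℂ) * Ψ s n‖ ^ 2)
      (nhdsWithin 0 (Set.Ioi 0)) (nhds 0) by
    have hcomp := (Real.continuous_sqrt.tendsto 0).comp hNN
    simpa [Function.comp_def, Real.sqrt_zero] using hcomp
  rw [Metric.tendsto_nhds]
  intro ε hε
  -- choose R
  have hRlim : Filter.Tendsto
      (fun R : ℝ => (2*(d:ℝ))^2 * (Real.exp (α*γ*R^(γ-1)) - 1)^2) Filter.atTop (nhds 0) := by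
    have h1 : Filter.Tendsto (fun R : ℝ => R^(γ-1)) Filter.atTop (nhds 0) := by
      have := tendsto_rpow_neg_atTop (y := 1 - γ) (by linarith)
      simpa [neg_sub] using this
    have h2 : Filter.Tendsto (fun R : ℝ => Real.exp (α*γ*R^(γ-1)) - 1)
        Filter.atTop (nhds 0) := by
      have h3 := (Real.continuous_exp.tendsto ((α*γ)*0)).comp (h1.const_mul (α*γ))
      have h4 := h3.sub_const 1
      simpa [Function.comp_def, mul_assoc] using h4
    have h5 := (h2.pow 2).const_mul ((2*(d:ℝ))^2)
    simpa using h5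
  obtain ⟨R, hR1, hRε⟩ : ∃ R : ℝ, 1 ≤ R ∧
      (2*(d:ℝ))^2 * (Real.exp (α*γ*R^(γ-1)) - 1)^2 < ε/2 := by
    have hev := hRlim.eventually (gt_mem_nhds (by positivity : (0:ℝ) < ε/2))
    obtain ⟨R, h1, h2⟩ := (hev.and (Filter.eventually_ge_atTop (1:ℝ))).exists
    exact ⟨R, h2, h1⟩
  have hSig0 : (0:ℝ) ≤ ∑' n : Fin d → ℤ, ‖ψ n‖^2 := tsum_nonneg fun n => sq_nonneg _
  set K : ℝ := (2*(d:ℝ))^2 * ((Real.exp (α*γ) - 1)^2 * Real.exp (2*(α * (R+1)^γ))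
      * (∑' n : Fin d → ℤ, ‖ψ n‖^2)) with hKdef
  have hK0 : 0 ≤ K := by
    have h1 : (0:ℝ) ≤ (Real.exp (α*γ) - 1)^2 * Real.exp (2*(α * (R+1)^γ)) := by positivity
    exact mul_nonneg (by positivity) (mul_nonneg h1 hSig0)
  have hDev := hDtop.eventually (Filter.eventually_ge_atTop (max 1 (2*K/ε + 1)))
  filter_upwards [hDev, eventually_mem_nhdsWithin] with s hDs hs
  have hDpos : (0:ℝ) < ∑' m : Fin d → ℤ, Real.exp (2 * Ups s (α * angBr m ^ γ)) * ‖ψ m‖ ^ 2 :=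
    lt_of_lt_of_le one_pos (le_trans (le_max_left _ _) hDs)
  have hkey := key_est V ψ E α γ hψ heig hα hγ0 hγ1 hs hR1 (Ψ s) (hΨ s) hDpos
  have hkey' : (∑' n : Fin d → ℤ,
        ‖discreteLap d (Ψ s) n + (V n : ℂ) * Ψ s n - (E : ℂ) * Ψ s n‖ ^ 2)
      ≤ K / (∑' m : Fin d → ℤ, Real.exp (2 * Ups s (α * angBr m ^ γ)) * ‖ψ m‖ ^ 2)
        + (2*(d:ℝ))^2 * (Real.exp (α*γ*R^(γ-1)) - 1)^2 := by
    refine le_trans hkey (le_of_eq ?_)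
    rw [hKdef]
    ring
  have hterm1 : K / (∑' m : Fin d → ℤ, Real.exp (2 * Ups s (α * angBr m ^ γ)) * ‖ψ m‖ ^ 2)
      < ε/2 := by
    rw [div_lt_iff₀ hDpos]
    have h2 : 2*K/ε + 1 ≤ ∑' m : Fin d → ℤ, Real.exp (2 * Ups s (α * angBr m ^ γ)) * ‖ψ m‖ ^ 2 :=
      le_trans (le_max_right _ _) hDs
    have h3 : (ε/2) * (2*K/ε + 1) = K + ε/2 := by field_simp
    nlinarith
  have hN0 : (0:ℝ) ≤ ∑' n : Fin d → ℤ,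
      ‖discreteLap d (Ψ s) n + (V n : ℂ) * Ψ s n - (E : ℂ) * Ψ s n‖ ^ 2 :=
    tsum_nonneg fun n => sq_nonneg _
  rw [Real.dist_eq, sub_zero, abs_of_nonneg hN0]
  linarith

end
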